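/- The Gaussian Q-function Q(x) = ∫ₓ^∞ (1/√(2π)) e^{−t²/2} dt is strictly decreasing on ℝ, and consequently, for fixed N > 0 and R ≥ 0, the decoding error probability ε(γ) = Q(f(γ)) with f(γ) = ln 2·√(N/(1−(1+γ)⁻²))·(log₂(1+γ) − R) is strictly decreasing in γ on (0, ∞). -/

import Mathlib

noncomputable def gaussQ (x : ℝ) : ℝ :=
  ∫ t in Set.Ioi x, (Real.sqrt (2 * Real.pi))⁻¹ * Real.exp (-t ^ 2 / 2)

/-!
`gaussQ` is the tail integral of an everywhere positive integrable density, hence strictly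
decreasing. For the rate gap, substitute `a = 1 + γ`: up to the positive factor `√N` it equals
`a / √(a² - 1) * (log a - R log 2)`, whose derivative `(a² - 1 - (log a - R log 2)) / (a² - 1)^(3/2)`
is positive because `log a ≤ a - 1 < a² - 1` for `a > 1`.
-/

open MeasureTheory ProbabilityTheory Real Set

theorem strictAnti_integral_Ioi_of_pos {f : ℝ → ℝ} (hf : Integrable f) (hpos : ∀ t, 0 < f t) :
    StrictAnti fun x => ∫ t in Ioi x, f t := by
  intro a b hab
  rw [← sub_pos, intervalIntegral.integral_Ioi_sub_Ioi hf.integrableOn hab.le]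
  exact intervalIntegral.intervalIntegral_pos_of_pos_on hf.intervalIntegrable
    (fun t _ => hpos t) hab

theorem gaussQ_eq_integral_gaussianPDFReal (x : ℝ) :
    gaussQ x = ∫ t in Ioi x, gaussianPDFReal 0 1 t := by
  simp [gaussQ, gaussianPDFReal]

theorem gaussQ_strictAnti : StrictAnti gaussQ := by
  simpa only [← funext gaussQ_eq_integral_gaussianPDFReal] using
    strictAnti_integral_Ioi_of_pos (integrable_gaussianPDFReal 0 1)
      (gaussianPDFReal_pos 0 1 · one_ne_zero)

theorem hasDerivAt_div_sqrt_sq_sub_one {a : ℝ} (ha : 1 < a) :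
    HasDerivAt (fun x => x / √(x ^ 2 - 1)) (-1 / ((a ^ 2 - 1) * √(a ^ 2 - 1))) a := by
  have hd : 0 < a ^ 2 - 1 := by nlinarith
  have hs : 0 < √(a ^ 2 - 1) := sqrt_pos.2 hd
  refine ((hasDerivAt_id' a).div (((hasDerivAt_pow 2 a).sub_const 1).sqrt hd.ne')
    hs.ne').congr_deriv ?_
  field_simp
  rw [sq_sqrt hd.le]
  norm_num
  ring

theorem log_sub_lt_sq_sub_one {a c : ℝ} (ha : 1 < a) (hc : 0 ≤ c) : log a - c < a ^ 2 - 1 := by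
  nlinarith [log_le_sub_one_of_pos (by linarith : 0 < a)]

theorem strictMonoOn_div_sqrt_sq_sub_one_mul_log_sub {c : ℝ} (hc : 0 ≤ c) :
    StrictMonoOn (fun a => a / √(a ^ 2 - 1) * (log a - c)) (Ioi 1) := by
  have hderiv : ∀ a ∈ Ioi (1 : ℝ), HasDerivAt (fun a => a / √(a ^ 2 - 1) * (log a - c))
      ((a ^ 2 - 1 - (log a - c)) / ((a ^ 2 - 1) * √(a ^ 2 - 1))) a := by
    intro a (ha : 1 < a)
    have hd : 0 < a ^ 2 - 1 := by nlinarith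
    refine ((hasDerivAt_div_sqrt_sq_sub_one ha).mul
      ((hasDerivAt_log (by linarith)).sub_const c)).congr_deriv ?_
    field_simp
    ring
  refine strictMonoOn_of_deriv_pos (convex_Ioi 1)
    (fun a ha => (hderiv a ha).continuousAt.continuousWithinAt) fun a ha => ?_
  rw [interior_Ioi] at ha
  have hd : 0 < a ^ 2 - 1 := by nlinarith [mem_Ioi.1 ha]
  have := sub_pos.2 (log_sub_lt_sq_sub_one ha hc)
  rw [(hderiv a ha).deriv]
  positivity

theorem sqrt_div_one_sub_inv_sq {N a : ℝ} (hN : 0 ≤ N) (ha : 0 < a) :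
    √(N / (1 - (a ^ 2)⁻¹)) = √N * (a / √(a ^ 2 - 1)) := by
  have hsub : 1 - (a ^ 2)⁻¹ = (a ^ 2 - 1) / a ^ 2 := by field_simp
  rw [hsub, div_div_eq_mul_div, sqrt_div (by positivity), sqrt_mul hN, sqrt_sq ha.le,
    mul_div_assoc]

theorem strictMonoOn_rateGap {N R : ℝ} (hN : 0 < N) (hR : 0 ≤ R) :
    StrictMonoOn (fun γ => log 2 * √(N / (1 - ((1 + γ) ^ 2)⁻¹)) * (log (1 + γ) / log 2 - R))
      (Ioi 0) := by
  have hrewrite : ∀ γ ∈ Ioi (0 : ℝ),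
      log 2 * √(N / (1 - ((1 + γ) ^ 2)⁻¹)) * (log (1 + γ) / log 2 - R) =
        √N * ((1 + γ) / √((1 + γ) ^ 2 - 1) * (log (1 + γ) - R * log 2)) := by
    intro γ (hγ : 0 < γ)
    rw [sqrt_div_one_sub_inv_sq hN.le (by linarith)]
    field_simp [(log_pos one_lt_two).ne']
  intro x hx y hy hxy
  dsimp only
  rw [hrewrite x hx, hrewrite y hy]
  refine mul_lt_mul_of_pos_left ?_ (sqrt_pos.2 hN)
  exact strictMonoOn_div_sqrt_sq_sub_one_mul_log_sub (by positivity)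
    (by simpa using hx) (by simpa using hy) (by linarith)

theorem Q_strictAnti_and_eps_strictAntiOn (N R : ℝ) (hN : 0 < N) (hR : 0 ≤ R) :
    StrictAnti gaussQ ∧
    StrictAntiOn
      (fun γ : ℝ => gaussQ (Real.log 2 * Real.sqrt (N / (1 - ((1 + γ) ^ 2)⁻¹)) *
        (Real.log (1 + γ) / Real.log 2 - R)))
      (Set.Ioi (0 : ℝ)) :=
  ⟨gaussQ_strictAnti, gaussQ_strictAnti.comp_strictMonoOn (strictMonoOn_rateGap hN hR)⟩
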